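/- Let S be a finite type, f : S → Bool → S, s₀ ∈ S and F ⊆ S, with every state of S reachable from s₀, and let C = {X : ℕ → Bool | r n ∈ F for some n}, where r is the run of X. If μ(C) < 1, then C is not dense: there exists a word u such that every sequence X having u as a prefix satisfies r n ∉ F for all n. -/

import Mathlib

open MeasureTheory Filter

/-- The fair-coin product probability measure on Cantor space `ℕ → Bool`,
constructed as the pushforward of Lebesgue measure on `[0,1)` under binary expansion. -/
noncomputable def mu : Measure (ℕ → Bool) :=
  Measure.map (fun x n => decide (⌊x * 2 ^ (n + 1)⌋ % 2 = 1))
    (volume.restrict (Set.Ico (0 : ℝ) 1))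

/-- Action of a word on a state of an automaton. -/
def act {S A : Type*} (f : S → A → S) (s : S) (w : List A) : S := w.foldl f s

/-- The run of a sequence `X` on the machine `(S, f, s₀)`. -/
def run {S : Type*} (f : S → Bool → S) (s₀ : S) (X : ℕ → Bool) : ℕ → S
  | 0 => s₀
  | n + 1 => f (run f s₀ X n) (X n)

/-- `t` is reachable from `s`. -/
def Reach {S : Type*} (f : S → Bool → S) (s t : S) : Prop := ∃ w : List Bool, act f s w = t

/-- The connected component of a state `s`. -/
def component {S : Type*} (f : S → Bool → S) (s : S) : Set S :=
  {t | Reach f s t ∧ Reach f t s}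

/-- `g` is a leaf connected component. -/
def IsLeafComponent {S : Type*} (f : S → Bool → S) (g : Set S) : Prop :=
  (∃ s, g = component f s) ∧ ∀ s ∈ g, ∀ t, Reach f s t → Reach f t s

/-- The word `w` occurs as a subword of the sequence `X`. -/
def Occurs (w : List Bool) (X : ℕ → Bool) : Prop :=
  ∃ n, ∀ k < w.length, X (n + k) = w.getD k false

/-- `X` is disjunctive: every word occurs in `X` as a subword. -/
def Disjunctive (X : ℕ → Bool) : Prop := ∀ w : List Bool, Occurs w X

/-- The word `w` is a prefix of the sequence `X`. -/
def IsPrefixOfSeq (w : List Bool) (X : ℕ → Bool) : Prop :=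
  ∀ k < w.length, X k = w.getD k false

/-- `[L]`: the set of sequences having some prefix in the language `L`. -/
def cyl (L : Set (List Bool)) : Set (ℕ → Bool) := {X | ∃ w ∈ L, IsPrefixOfSeq w X}

/-- `I(X)`: the set of states visited infinitely often by the run of `X`. -/
def InfOcc {S : Type*} (f : S → Bool → S) (s₀ : S) (X : ℕ → Bool) : Set S :=
  {s | ∃ᶠ n in atTop, run f s₀ X n = s}

/-- `X` is accepted by the deterministic Büchi automaton `(S, f, s₀, F)`. -/
def BuchiAccepts {S : Type*} (f : S → Bool → S) (s₀ : S) (F : Set S) (X : ℕ → Bool) : Prop :=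
  ∃ᶠ n in atTop, run f s₀ X n ∈ F

/-- A language is regular if it is accepted by a DFA with finitely many states. -/
def Regular {A : Type} (L : Set (List A)) : Prop :=
  ∃ (S : Type) (_ : Fintype S) (f : S → A → S) (s₀ : S) (F : Set S),
    L = {w | act f s₀ w ∈ F}

/-- The convolution of two words. -/
def conv (x i : List Bool) : List (Option Bool × Option Bool) :=
  (List.range (max x.length i.length)).map (fun k => (x[k]?, i[k]?))

/-- `(I, U)` is an automatic family. -/
def IsAutomaticFamily (I : Set (List Bool)) (U : List Bool → Set (List Bool)) : Prop :=
  Regular I ∧ Regular {c | ∃ i ∈ I, ∃ x ∈ U i, c = conv x i}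

/-- `(I, U)` is an automatic randomness test (ART). -/
def IsART (I : Set (List Bool)) (U : List Bool → Set (List Bool)) : Prop :=
  IsAutomaticFamily I U ∧ ∀ ε : ENNReal, 0 < ε → ∃ i ∈ I, mu (cyl (U i)) ≤ ε

/-- `(I, U)` is a Martin-Löf automatic randomness test (MART). -/
def IsMART (I : Set (List Bool)) (U : List Bool → Set (List Bool)) : Prop :=
  IsAutomaticFamily I U ∧ I.Infinite ∧
    ∀ i ∈ I, mu (cyl (U i)) ≤ (2 : ENNReal) ^ (-(i.length : ℤ))

/-- The covering region `F(I, U)` of a test. -/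
def coverRegion (I : Set (List Bool)) (U : List Bool → Set (List Bool)) : Set (ℕ → Bool) :=
  ⋂ i ∈ I, cyl (U i)

/-!
If every word extends to a sequence whose run meets `F`, then every state reachable along an
`F`-avoiding run has a word leading it into `F`. As there are finitely many states, these words
concatenate to a single word `w` that drives each such state through `F`. The run of a sequence
avoiding `F` stays among these states, so the sequence misses `w` in each of its aligned blocks
of length `|w|`; for `m` blocks this has probability at most `(1 - 2 ^ (-|w|)) ^ m`, hence the
sequences avoiding `F` form a null set.
-/

open scoped ENNReal

noncomputable def binaryDigits (x : ℝ) (n : ℕ) : Bool := decide (⌊x * 2 ^ (n + 1)⌋ % 2 = 1)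

lemma mu_eq_map_binaryDigits :
    mu = (volume.restrict (Set.Ico (0 : ℝ) 1)).map binaryDigits := rfl

lemma measurable_binaryDigits : Measurable binaryDigits :=
  measurable_pi_lambda _ fun _ => (measurable_of_countable fun z : ℤ => decide (z % 2 = 1)).comp
    (Int.measurable_floor.comp (measurable_id.mul_const _))

lemma mu_apply {A : Set (ℕ → Bool)} (hA : MeasurableSet A) :
    mu A = volume (binaryDigits ⁻¹' A ∩ Set.Ico 0 1) := by
  rw [mu_eq_map_binaryDigits, Measure.map_apply measurable_binaryDigits hA,
    Measure.restrict_apply (measurable_binaryDigits hA)]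

instance : IsProbabilityMeasure mu where
  measure_univ := by
    rw [mu_apply MeasurableSet.univ, Set.preimage_univ, Set.univ_inter, Real.volume_Ico]
    norm_num

lemma floor_mul_two_pow_succ (x : ℝ) (n : ℕ) :
    ⌊x * 2 ^ (n + 1)⌋ = 2 * ⌊x * 2 ^ n⌋ + ⌊x * 2 ^ (n + 1)⌋ % 2 := by
  have hlower : 2 * ⌊x * 2 ^ n⌋ ≤ ⌊x * 2 ^ (n + 1)⌋ := by
    rw [Int.le_floor, pow_succ]
    push_cast
    nlinarith [Int.floor_le (x * 2 ^ n)]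
  have hupper : ⌊x * 2 ^ (n + 1)⌋ < 2 * ⌊x * 2 ^ n⌋ + 2 := by
    rw [Int.floor_lt, pow_succ]
    push_cast
    nlinarith [Int.lt_floor_add_one (x * 2 ^ n)]
  omega

lemma floor_mul_two_pow_eq {x y : ℝ} (hx : x ∈ Set.Ico (0 : ℝ) 1)
    (hy : y ∈ Set.Ico (0 : ℝ) 1) {n : ℕ} (hxy : ∀ k < n, binaryDigits x k = binaryDigits y k) :
    ⌊x * 2 ^ n⌋ = ⌊y * 2 ^ n⌋ := by
  induction n with
  | zero => simp [Int.floor_eq_zero_iff.2 hx, Int.floor_eq_zero_iff.2 hy]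
  | succ n ih =>
    have hn := hxy n n.lt_succ_self
    simp only [binaryDigits, decide_eq_decide] at hn
    have := ih fun k hk => hxy k (hk.trans n.lt_succ_self)
    have := floor_mul_two_pow_succ x n
    have := floor_mul_two_pow_succ y n
    omega

lemma measurableSet_cylinder (n : ℕ) (g : ℕ → Bool) :
    MeasurableSet {X : ℕ → Bool | ∀ k < n, X k = g k} := by
  measurability

lemma mu_cylinder_le (n : ℕ) (g : ℕ → Bool) :
    mu {X | ∀ k < n, X k = g k} ≤ 2⁻¹ ^ n := by
  rw [mu_apply (measurableSet_cylinder n g)]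
  set T := binaryDigits ⁻¹' {X | ∀ k < n, X k = g k} ∩ Set.Ico 0 1
  obtain hT | ⟨x₀, hx₀g, hx₀⟩ := T.eq_empty_or_nonempty
  · simp [hT]
  set a := ⌊x₀ * 2 ^ n⌋
  have hpos : (0 : ℝ) < 2 ^ n := by positivity
  have hsub : T ⊆ Set.Ico (a / 2 ^ n) ((a + 1) / 2 ^ n) := by
    rintro x ⟨hxg, hx⟩
    have hfloor : ⌊x * 2 ^ n⌋ = a :=
      floor_mul_two_pow_eq hx hx₀ fun k hk => (hxg k hk).trans (hx₀g k hk).symm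
    rw [Set.mem_Ico, div_le_iff₀ hpos, lt_div_iff₀ hpos, ← hfloor]
    exact ⟨Int.floor_le _, Int.lt_floor_add_one _⟩
  calc volume T ≤ volume (Set.Ico ((a : ℝ) / 2 ^ n) ((a + 1) / 2 ^ n)) := measure_mono hsub
    _ = ENNReal.ofReal (2⁻¹ ^ n) := by
      rw [Real.volume_Ico, ← sub_div, add_sub_cancel_left, one_div, inv_pow]
    _ = 2⁻¹ ^ n := by rw [ENNReal.ofReal_pow (by norm_num), ENNReal.ofReal_inv_of_pos two_pos,
      ENNReal.ofReal_ofNat]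

lemma mu_le_of_subset_iUnion_cylinder {ι : Type*} [Fintype ι] {A : Set (ℕ → Bool)} (n : ℕ)
    (g : ι → ℕ → Bool) (hA : A ⊆ ⋃ i, {X | ∀ k < n, X k = g i k}) :
    mu A ≤ Fintype.card ι * 2⁻¹ ^ n :=
  calc mu A ≤ ∑ i, mu {X | ∀ k < n, X k = g i k} :=
        (measure_mono hA).trans (measure_iUnion_fintype_le _ _)
    _ ≤ ∑ _i : ι, (2⁻¹ : ℝ≥0∞) ^ n := Finset.sum_le_sum fun i _ => mu_cylinder_le n _
    _ = Fintype.card ι * 2⁻¹ ^ n := by simp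

lemma isPrefixOfSeq_iff_eq_get {w : List Bool} {Y : ℕ → Bool} :
    IsPrefixOfSeq w Y ↔ (fun i : Fin w.length => Y i) = w.get := by
  simp only [IsPrefixOfSeq, funext_iff, Fin.forall_iff, List.get_eq_getElem]
  exact forall₂_congr fun k hk => by rw [List.getD_eq_getElem _ _ hk]

/-- A sequence missing `w` in each of its first `m` aligned blocks of length `|w|` lies in one of
`(2 ^ |w| - 1) ^ m` cylinders of length `m * |w|`. -/
lemma mu_forall_lt_not_isPrefixOfSeq_block_le {w : List Bool} (hw : w ≠ []) (m : ℕ) :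
    mu {X | ∀ j < m, ¬ IsPrefixOfSeq w fun i => X (j * w.length + i)} ≤
      ((2 ^ w.length - 1 : ℕ) * 2⁻¹ ^ w.length : ℝ≥0∞) ^ m := by
  set L := w.length
  have hL : 0 < L := List.length_pos_iff.2 hw
  let G (v : Fin m → {g : Fin L → Bool // g ≠ w.get}) (k : ℕ) : Bool :=
    if hk : k / L < m then (v ⟨k / L, hk⟩).1 ⟨k % L, Nat.mod_lt _ hL⟩ else false
  refine (mu_le_of_subset_iUnion_cylinder (m * L) G ?_).trans_eq ?_
  · intro X hX
    refine Set.mem_iUnion.2 ⟨fun j => ⟨fun i => X (j * L + i),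
      isPrefixOfSeq_iff_eq_get.not.1 (hX j j.2)⟩, fun k hk => ?_⟩
    have hkm : k / L < m := (Nat.div_lt_iff_lt_mul hL).2 hk
    simp only [G, hkm, dif_pos, Nat.div_add_mod']
  · simp [mul_pow, ← pow_mul, mul_comm L m]

lemma mu_forall_not_isPrefixOfSeq_block (w : List Bool) :
    mu {X | ∀ j, ¬ IsPrefixOfSeq w fun i => X (j * w.length + i)} = 0 := by
  rcases eq_or_ne w [] with rfl | hw
  · simp [IsPrefixOfSeq]
  have hq : ((2 ^ w.length - 1 : ℕ) * 2⁻¹ ^ w.length : ℝ≥0∞) < 1 := by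
    rw [← ENNReal.inv_pow, ← div_eq_mul_inv, ENNReal.div_lt_iff (by simp) (by simp), one_mul]
    exact_mod_cast Nat.sub_lt (by positivity) one_pos
  refine nonpos_iff_eq_zero.1 (ge_of_tendsto' (ENNReal.tendsto_pow_atTop_nhds_zero_of_lt_one hq)
    fun m => ?_)
  exact (measure_mono (Set.ofPred_subset_ofPred.2 fun X hX j _ => hX j)).trans
    (mu_forall_lt_not_isPrefixOfSeq_block_le hw m)

section Automaton

variable {S A : Type*} {f : S → A → S} {F : Set S}

lemma act_append (s : S) (u v : List A) : act f s (u ++ v) = act f (act f s u) v :=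
  List.foldl_append ..

variable (f F) in
def Visits (s : S) (w : List A) : Prop := ∃ p, p <+: w ∧ act f s p ∈ F

lemma Visits.mono {s : S} {u w : List A} (h : Visits f F s u) (huw : u <+: w) :
    Visits f F s w :=
  let ⟨p, hp, hpF⟩ := h
  ⟨p, hp.trans huw, hpF⟩

lemma visits_append {s : S} {u v : List A} :
    Visits f F s (u ++ v) ↔ Visits f F s u ∨ Visits f F (act f s u) v := by
  constructor
  · rintro ⟨p, hp, hpF⟩
    rcases List.prefix_or_prefix_of_prefix hp (List.prefix_append u v) with hpu | ⟨r, rfl⟩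
    · exact .inl ⟨p, hpu, hpF⟩
    · exact .inr ⟨r, (List.prefix_append_right_inj u).1 hp, by rwa [← act_append]⟩
  · rintro (h | ⟨r, hr, hrF⟩)
    · exact h.mono (List.prefix_append u v)
    · exact ⟨u ++ r, (List.prefix_append_right_inj u).2 hr, by rwa [act_append]⟩

/-- If `w` drives the states of `T` through `F` but not `s`, then `s · w` is still in `D`, and
appending to `w` a word driving `s · w` through `F` handles `insert s T`. -/
lemma exists_visits_forall_of_finite {D : Set S} (hD : D.Finite)
    (hclosed : ∀ s ∈ D, ∀ q, ¬ Visits f F s q → act f s q ∈ D)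
    (hescape : ∀ s ∈ D, ∃ v, Visits f F s v) : ∃ w, ∀ s ∈ D, Visits f F s w := by
  refine Set.Finite.induction_on_subset (motive := fun T _ => ∃ w, ∀ s ∈ T, Visits f F s w)
    D hD ⟨[], by simp⟩ ?_
  rintro s T hsD - - ⟨w, hw⟩
  by_cases hs : Visits f F s w
  · exact ⟨w, Set.forall_mem_insert.2 ⟨hs, hw⟩⟩
  obtain ⟨v, hv⟩ := hescape _ (hclosed s hsD w hs)
  exact ⟨w ++ v, Set.forall_mem_insert.2 ⟨visits_append.2 (.inr hv),
    fun t ht => (hw t ht).mono (List.prefix_append w v)⟩⟩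

variable (f F) in
def safeStates (s₀ : S) : Set S := {s | ∃ u, act f s₀ u = s ∧ ¬ Visits f F s₀ u}

lemma act_mem_safeStates {s₀ s : S} (hs : s ∈ safeStates f F s₀) {q : List A}
    (hq : ¬ Visits f F s q) : act f s q ∈ safeStates f F s₀ := by
  obtain ⟨u, rfl, hu⟩ := hs
  exact ⟨u ++ q, act_append .., by simp [visits_append, hu, hq]⟩

end Automaton

section Sequences

variable {S A : Type*} {f : S → Bool → S} {F : Set S}

def seqPrefix (X : ℕ → A) (n : ℕ) : List A := (List.range n).map X

lemma seqPrefix_prefix_of_le (X : ℕ → A) {m n : ℕ} (h : m ≤ n) :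
    seqPrefix X m <+: seqPrefix X n := by
  rw [List.prefix_iff_eq_take, seqPrefix, seqPrefix, ← List.map_take, List.take_range]
  simp [h]

lemma eq_seqPrefix_of_prefix {X : ℕ → A} {n : ℕ} {p : List A} (h : p <+: seqPrefix X n) :
    p = seqPrefix X p.length := by
  have hle : p.length ≤ n := by simpa [seqPrefix] using h.length_le
  conv_lhs => rw [List.prefix_iff_eq_take.1 h]
  unfold seqPrefix
  rw [← List.map_take, List.take_range, min_eq_left hle]

lemma IsPrefixOfSeq.seqPrefix_eq {u : List Bool} {X : ℕ → Bool} (h : IsPrefixOfSeq u X) :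
    seqPrefix X u.length = u := by
  refine List.ext_getElem (by simp [seqPrefix]) fun i _ hi => ?_
  simp only [seqPrefix, List.getElem_map, List.getElem_range]
  rw [h i hi, List.getD_eq_getElem _ _ hi]

lemma run_eq_act (s : S) (X : ℕ → Bool) (n : ℕ) : run f s X n = act f s (seqPrefix X n) := by
  induction n with
  | zero => rfl
  | succ n ih => simp [run, ih, seqPrefix, List.range_succ, act]

lemma run_add (s : S) (X : ℕ → Bool) (a k : ℕ) :
    run f s X (a + k) = run f (run f s X a) (fun i => X (a + i)) k := by
  induction k with
  | zero => rfl
  | succ k ih => rw [← add_assoc, run, run, ih]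

lemma visits_seqPrefix_iff {s : S} {X : ℕ → Bool} {n : ℕ} :
    Visits f F s (seqPrefix X n) ↔ ∃ k ≤ n, run f s X k ∈ F := by
  constructor
  · rintro ⟨p, hp, hpF⟩
    refine ⟨p.length, by simpa [seqPrefix] using hp.length_le, ?_⟩
    rwa [run_eq_act, ← eq_seqPrefix_of_prefix hp]
  · rintro ⟨k, hk, hkF⟩
    exact ⟨seqPrefix X k, seqPrefix_prefix_of_le X hk, by rwa [← run_eq_act]⟩

lemma not_isPrefixOfSeq_shift {s₀ : S} {X : ℕ → Bool} {w : List Bool}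
    (hX : ∀ n, run f s₀ X n ∉ F) (hw : ∀ n, Visits f F (run f s₀ X n) w) (a : ℕ) :
    ¬ IsPrefixOfSeq w fun i => X (a + i) := by
  intro hwX
  obtain ⟨k, -, hk⟩ := visits_seqPrefix_iff.1 (hwX.seqPrefix_eq ▸ hw a)
  exact hX (a + k) (run_add s₀ X a k ▸ hk)

lemma run_mem_safeStates {s₀ : S} {X : ℕ → Bool} (hX : ∀ n, run f s₀ X n ∉ F) (n : ℕ) :
    run f s₀ X n ∈ safeStates f F s₀ :=
  ⟨seqPrefix X n, (run_eq_act ..).symm,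
    fun hv => let ⟨k, _, hk⟩ := visits_seqPrefix_iff.1 hv; hX k hk⟩

lemma exists_visits_of_mem_safeStates {s₀ s : S}
    (hdense : ∀ u, ∃ X, IsPrefixOfSeq u X ∧ ∃ n, run f s₀ X n ∈ F)
    (hs : s ∈ safeStates f F s₀) : ∃ v, Visits f F s v := by
  obtain ⟨u, rfl, hu⟩ := hs
  obtain ⟨X, hXu, n, hn⟩ := hdense u
  obtain ⟨v, hv⟩ := seqPrefix_prefix_of_le X (u.length.le_add_left n)
  have huv : Visits f F s₀ (u ++ v) := by
    rw [← hXu.seqPrefix_eq, hv, visits_seqPrefix_iff]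
    exact ⟨n, n.le_add_right _, hn⟩
  exact ⟨v, (visits_append.1 huv).resolve_left hu⟩

end Sequences

theorem stmt19_general {S : Type} [Fintype S] (f : S → Bool → S) (s₀ : S) (F : Set S)
    (h : mu {X : ℕ → Bool | ∃ n : ℕ, run f s₀ X n ∈ F} < 1) :
    ∃ u : List Bool, ∀ X : ℕ → Bool, IsPrefixOfSeq u X → ∀ n : ℕ, run f s₀ X n ∉ F := by
  by_contra! hdense
  obtain ⟨w, hw⟩ := exists_visits_forall_of_finite (safeStates f F s₀).toFinite
    (fun _ hs _ => act_mem_safeStates hs) (fun _ => exists_visits_of_mem_safeStates hdense)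
  have havoid : {X | ∃ n, run f s₀ X n ∈ F}ᶜ ⊆
      {X | ∀ j, ¬ IsPrefixOfSeq w fun i => X (j * w.length + i)} := by
    intro X hX j
    simp only [Set.mem_compl_iff, Set.mem_ofPred_eq, not_exists] at hX
    exact not_isPrefixOfSeq_shift hX (fun n => hw _ (run_mem_safeStates hX n)) _
  have hnull := measure_mono_null havoid (mu_forall_not_isPrefixOfSeq_block w)
  exact h.ne (by rw [measure_congr (ae_eq_univ.2 hnull), measure_univ])

/-- If the class of sequences whose run ever visits an accepting state
does not have full measure, then it is not dense: some word `u` cannot be extended to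
a sequence in it. -/
theorem stmt19 {S : Type} [Fintype S] (f : S → Bool → S) (s₀ : S) (F : Set S)
    (hreach : ∀ s : S, Reach f s₀ s)
    (h : mu {X : ℕ → Bool | ∃ n : ℕ, run f s₀ X n ∈ F} < 1) :
    ∃ u : List Bool, ∀ X : ℕ → Bool, IsPrefixOfSeq u X → ∀ n : ℕ, run f s₀ X n ∉ F :=
  stmt19_general f s₀ F h
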